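/- Let G be a bipartite graph with parts of sizes at most n each and with at least c·n² edges, where c > 0 and n is sufficiently large. Then G contains at least c'·n⁴ copies of K_{2,2} (i.e., quadruples (y₁,y₂,z₁,z₂) with all four edges present), for some constant c' > 0 depending only on c. -/

import Mathlib

/-!
Write `d z` for the degree of `z ∈ Z` and `cod y₁ y₂` for the number of common neighbours of
`y₁, y₂ ∈ Y`. Counting paths `y₁ - z - y₂` and homomorphic `C₄`s gives
`∑ cod = ∑ d²` and `#C₄-homomorphisms = ∑ cod²`, so two applications of Cauchy–Schwarz yield
`#E⁴ ≤ (#Y · #Z)² · #C₄-homomorphisms`. With `#E ≥ c n²` this is at least `c⁴ n⁴`, while the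
degenerate homomorphisms (`y₁ = y₂` or `z₁ = z₂`) number at most `2 n³`.
-/

open Finset

namespace BipartiteC4

variable {α β : Type*} (Adj : α → β → Prop) [∀ a b, Decidable (Adj a b)]
  (Y : Finset α) (Z : Finset β)

def edges : Finset (α × β) := (Y ×ˢ Z).filter fun p => Adj p.1 p.2

def nbrs (z : β) : Finset α := Y.filter (Adj · z)

def commonNbrs (y₁ y₂ : α) : Finset β := Z.filter fun z => Adj y₁ z ∧ Adj y₂ z

def c4Homs : Finset ((α × α) × β × β) :=
  ((Y ×ˢ Y) ×ˢ (Z ×ˢ Z)).filter fun q =>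
    Adj q.1.1 q.2.1 ∧ Adj q.1.1 q.2.2 ∧ Adj q.1.2 q.2.1 ∧ Adj q.1.2 q.2.2

def c4Copies [DecidableEq α] [DecidableEq β] : Finset ((α × α) × β × β) :=
  ((Y ×ˢ Y) ×ˢ (Z ×ˢ Z)).filter fun q =>
    q.1.1 ≠ q.1.2 ∧ q.2.1 ≠ q.2.2 ∧
      Adj q.1.1 q.2.1 ∧ Adj q.1.1 q.2.2 ∧ Adj q.1.2 q.2.1 ∧ Adj q.1.2 q.2.2

theorem card_edges_eq_sum_card_nbrs : #(edges Adj Y Z) = ∑ z ∈ Z, #(nbrs Adj Y z) := by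
  simp only [edges, nbrs, card_filter, sum_product_right]

theorem sum_card_commonNbrs_eq_sum_sq :
    ∑ p ∈ Y ×ˢ Y, #(commonNbrs Adj Z p.1 p.2) = ∑ z ∈ Z, #(nbrs Adj Y z) ^ 2 := by
  simp only [commonNbrs, card_filter]
  rw [sum_comm]
  refine sum_congr rfl fun z _ => ?_
  rw [← card_filter, filter_product (Adj · z) (Adj · z), card_product, nbrs, sq]

theorem card_c4Homs_eq_sum_sq :
    #(c4Homs Adj Y Z) = ∑ p ∈ Y ×ˢ Y, #(commonNbrs Adj Z p.1 p.2) ^ 2 := by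
  rw [c4Homs, card_filter, sum_product]
  refine sum_congr rfl fun p _ => ?_
  rw [← card_filter, sq, commonNbrs, ← card_product, ← filter_product]
  congr 1
  exact filter_congr fun _ _ => by tauto

theorem card_edges_pow_four_le :
    #(edges Adj Y Z) ^ 4 ≤ (#Y * #Z) ^ 2 * #(c4Homs Adj Y Z) := by
  have paths : #(edges Adj Y Z) ^ 2 ≤ #Z * ∑ p ∈ Y ×ˢ Y, #(commonNbrs Adj Z p.1 p.2) := by
    rw [card_edges_eq_sum_card_nbrs, sum_card_commonNbrs_eq_sum_sq]
    exact sq_sum_le_card_mul_sum_sq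
  have cycles : (∑ p ∈ Y ×ˢ Y, #(commonNbrs Adj Z p.1 p.2)) ^ 2 ≤ #Y ^ 2 * #(c4Homs Adj Y Z) := by
    rw [card_c4Homs_eq_sum_sq, sq #Y, ← card_product]
    exact sq_sum_le_card_mul_sum_sq
  calc #(edges Adj Y Z) ^ 4 = (#(edges Adj Y Z) ^ 2) ^ 2 := by ring
    _ ≤ #Z ^ 2 * (∑ p ∈ Y ×ˢ Y, #(commonNbrs Adj Z p.1 p.2)) ^ 2 := by
      rw [← mul_pow]; gcongr
    _ ≤ #Z ^ 2 * (#Y ^ 2 * #(c4Homs Adj Y Z)) := by gcongr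
    _ = (#Y * #Z) ^ 2 * #(c4Homs Adj Y Z) := by ring

theorem card_c4Homs_le [DecidableEq α] [DecidableEq β] :
    #(c4Homs Adj Y Z) ≤ #(c4Copies Adj Y Z) + #Y * #Z ^ 2 + #Y ^ 2 * #Z := by
  have cover : c4Homs Adj Y Z ⊆ c4Copies Adj Y Z
      ∪ (Y ×ˢ (Z ×ˢ Z)).image (fun q => ((q.1, q.1), q.2))
      ∪ ((Y ×ˢ Y) ×ˢ Z).image (fun q => (q.1, (q.2, q.2))) := by
    rintro ⟨⟨y₁, y₂⟩, z₁, z₂⟩ hq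
    simp only [c4Homs, mem_filter, mem_product] at hq
    simp only [c4Copies, mem_union, mem_filter, mem_image, mem_product, Prod.exists,
      Prod.mk.injEq]
    by_cases hy : y₁ = y₂
    · subst hy; exact Or.inl (Or.inr ⟨y₁, z₁, z₂, ⟨hq.1.1.1, hq.1.2⟩, ⟨rfl, rfl⟩, rfl, rfl⟩)
    by_cases hz : z₁ = z₂
    · subst hz; exact Or.inr ⟨y₁, y₂, z₁, ⟨hq.1.1, hq.1.2.1⟩, ⟨rfl, rfl⟩, rfl, rfl⟩
    exact Or.inl (Or.inl ⟨hq.1, hy, hz, hq.2⟩)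
  calc #(c4Homs Adj Y Z) ≤ _ := card_le_card cover
    _ ≤ _ := card_union_le _ _
    _ ≤ _ := add_le_add_left (card_union_le _ _) _
    _ ≤ #(c4Copies Adj Y Z) + #(Y ×ˢ (Z ×ˢ Z)) + #((Y ×ˢ Y) ×ˢ Z) := by
      gcongr <;> exact card_image_le
    _ = #(c4Copies Adj Y Z) + #Y * #Z ^ 2 + #Y ^ 2 * #Z := by simp only [card_product, sq]

theorem mul_pow_four_le_card_c4Homs {n : ℕ} {c : ℝ} (hc : 0 ≤ c) (hY : #Y ≤ n) (hZ : #Z ≤ n)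
    (hE : c * (n : ℝ) ^ 2 ≤ #(edges Adj Y Z)) : c ^ 4 * (n : ℝ) ^ 4 ≤ #(c4Homs Adj Y Z) := by
  rcases n.eq_zero_or_pos with rfl | hn
  · simp
  have hYZ : (#Y * #Z : ℝ) ≤ (n : ℝ) ^ 2 := by rw [sq]; gcongr
  have key : (n : ℝ) ^ 4 * (c ^ 4 * (n : ℝ) ^ 4) ≤ (n : ℝ) ^ 4 * #(c4Homs Adj Y Z) :=
    calc (n : ℝ) ^ 4 * (c ^ 4 * (n : ℝ) ^ 4) = (c * (n : ℝ) ^ 2) ^ 4 := by ring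
      _ ≤ (#(edges Adj Y Z) : ℝ) ^ 4 := by gcongr
      _ ≤ (#Y * #Z : ℝ) ^ 2 * #(c4Homs Adj Y Z) := by
        exact_mod_cast card_edges_pow_four_le Adj Y Z
      _ ≤ ((n : ℝ) ^ 2) ^ 2 * #(c4Homs Adj Y Z) := by gcongr
      _ = (n : ℝ) ^ 4 * #(c4Homs Adj Y Z) := by ring
  exact le_of_mul_le_mul_left key (by positivity)

end BipartiteC4

open BipartiteC4 in
/-- Erdős–Simonovits, `t = 2` case, bipartite form: for every
`c > 0` there is `c' > 0` such that for all sufficiently large `n`, every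
bipartite graph with parts of size at most `n` and at least `c·n²` edges
contains at least `c'·n⁴` (ordered) copies of `K_{2,2}`. -/
theorem stmt_13 (c : ℝ) (hc : 0 < c) :
    ∃ c' : ℝ, 0 < c' ∧ ∃ N : ℕ, ∀ n : ℕ, N ≤ n →
      ∀ (α β : Type) [DecidableEq α] [DecidableEq β]
        (Adj : α → β → Prop) [∀ a b, Decidable (Adj a b)]
        (Y : Finset α) (Z : Finset β),
        Y.card ≤ n → Z.card ≤ n →
        c * (n : ℝ) ^ 2 ≤ (((Y ×ˢ Z).filter (fun p => Adj p.1 p.2)).card : ℝ) →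
        c' * (n : ℝ) ^ 4 ≤
          ((((Y ×ˢ Y) ×ˢ (Z ×ˢ Z)).filter
            (fun q => q.1.1 ≠ q.1.2 ∧ q.2.1 ≠ q.2.2 ∧
              Adj q.1.1 q.2.1 ∧ Adj q.1.1 q.2.2 ∧
              Adj q.1.2 q.2.1 ∧ Adj q.1.2 q.2.2)).card : ℝ) := by
  refine ⟨c ^ 4 / 2, by positivity, ⌈4 / c ^ 4⌉₊, fun n hn α β _ _ Adj _ Y Z hY hZ hE => ?_⟩
  have hcn : 4 ≤ c ^ 4 * n := by
    rw [← div_le_iff₀' (by positivity)]; exact Nat.ceil_le.mp hn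
  have homs := mul_pow_four_le_card_c4Homs Adj Y Z hc.le hY hZ hE
  have degenerate : (#(c4Homs Adj Y Z) : ℝ) ≤ #(c4Copies Adj Y Z) + n * n ^ 2 + n ^ 2 * n := by
    calc (#(c4Homs Adj Y Z) : ℝ) ≤ #(c4Copies Adj Y Z) + #Y * #Z ^ 2 + #Y ^ 2 * #Z := by
          exact_mod_cast card_c4Homs_le Adj Y Z
      _ ≤ _ := by gcongr
  change c ^ 4 / 2 * (n : ℝ) ^ 4 ≤ #(c4Copies Adj Y Z)
  nlinarith [pow_nonneg (Nat.cast_nonneg n : (0 : ℝ) ≤ n) 3]
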